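/- For every n ≥ 1, the number g^{(n,n)} of standard increasing tableaux of the two-row rectangular shape (n,n) equals the n-th little Schröder number s_n. -/

import Mathlib

open Finset

namespace HookG

/-- Cells of the skew diagram λ/μ (0-indexed). -/
def skewCells (lam mu : YoungDiagram) : Finset (ℕ × ℕ) := lam.cells \ mu.cells

/-- The maximal entry `m(T)` of a tableau (which is 0 outside the shape). -/
def maxEntry (lam mu : YoungDiagram) (T : ℕ × ℕ → ℕ) : ℕ := (skewCells lam mu).sup T

/-- `T` is a filling of λ/μ by positive integers, strictly increasing along rows and
down columns, and zero outside of λ/μ. -/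
def IsIncreasing (lam mu : YoungDiagram) (T : ℕ × ℕ → ℕ) : Prop :=
  (∀ u, u ∉ skewCells lam mu → T u = 0) ∧
  (∀ u ∈ skewCells lam mu, 1 ≤ T u) ∧
  (∀ i j₁ j₂, j₁ < j₂ → (i, j₁) ∈ skewCells lam mu → (i, j₂) ∈ skewCells lam mu →
      T (i, j₁) < T (i, j₂)) ∧
  (∀ i₁ i₂ j, i₁ < i₂ → (i₁, j) ∈ skewCells lam mu → (i₂, j) ∈ skewCells lam mu →
      T (i₁, j) < T (i₂, j))

/-- Standard increasing tableau: the set of entries is exactly `{1, …, m(T)}`. -/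
def IsSIT (lam mu : YoungDiagram) (T : ℕ × ℕ → ℕ) : Prop :=
  IsIncreasing lam mu T ∧
  ∀ k, 1 ≤ k → k ≤ maxEntry lam mu T → ∃ u ∈ skewCells lam mu, T u = k

/-- `ν_{i+1}(T_{<k})` (for the 0-indexed row `i`): the number of cells in row `i` of the
diagram consisting of μ together with the cells of `T` carrying an entry < k. -/
def nuRow (lam mu : YoungDiagram) (T : ℕ × ℕ → ℕ) (k i : ℕ) : ℕ :=
  (lam.cells.filter fun u => u.1 = i ∧ (u ∈ mu.cells ∨ (1 ≤ T u ∧ T u < k))).card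

/-- Hook length of the (0-indexed) cell `u = (i,j)` of λ:
`h = λ_{i+1} + λ'_{j+1} - i - j - 1` (1-indexed: `λ_i − j + λ'_j − i + 1`). -/
def hook (lam : YoungDiagram) (u : ℕ × ℕ) : ℕ :=
  lam.rowLen u.1 + lam.colLen u.2 - u.1 - u.2 - 1

/-- `|T|`, the sum of the entries of a tableau. -/
def entrySum (lam mu : YoungDiagram) (T : ℕ × ℕ → ℕ) : ℕ := ∑ u ∈ skewCells lam mu, T u

/-- `a(T_{≥k})`, the number of cells of `T` with entry ≥ k. -/
def aGe (lam mu : YoungDiagram) (T : ℕ × ℕ → ℕ) (k : ℕ) : ℕ :=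
  ((skewCells lam mu).filter fun u => k ≤ T u).card

/-- The cell `(i,j)` of `D` is active: `(i+1,j), (i,j+1), (i+1,j+1)` all belong to `λ ∖ D`. -/
def ActiveCell (lam : YoungDiagram) (D : Finset (ℕ × ℕ)) (i j : ℕ) : Prop :=
  (i, j) ∈ D ∧
  ((i + 1, j) ∈ lam.cells ∧ (i + 1, j) ∉ D) ∧
  ((i, j + 1) ∈ lam.cells ∧ (i, j + 1) ∉ D) ∧
  ((i + 1, j + 1) ∈ lam.cells ∧ (i + 1, j + 1) ∉ D)

/-- An excited move of type I (replace the active cell by `(i+1,j+1)`)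
or of type II (add `(i+1,j+1)` keeping the active cell). -/
def GenMove (lam : YoungDiagram) (D D' : Finset (ℕ × ℕ)) : Prop :=
  ∃ i j, ActiveCell lam D i j ∧
    (D' = insert (i + 1, j + 1) (D.erase (i, j)) ∨ D' = insert (i + 1, j + 1) D)

/-- The set `D(λ/μ)` of generalized excited diagrams: all subsets of λ obtained from the
Young diagram of μ by sequences of excited moves of both types. -/
def GenExcited (lam mu : YoungDiagram) : Set (Finset (ℕ × ℕ)) :=
  {D | Relation.ReflTransGen (GenMove lam) mu.cells D}

end HookG

open HookG

namespace HookG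

/-- The 2×n rectangular Young diagram (shape `(n,n)`). -/
def twoRow (n : ℕ) : YoungDiagram where
  cells := Finset.range 2 ×ˢ Finset.range n
  isLowerSet := by
    intro a b hba ha
    simp only [Finset.coe_product, Set.mem_prod, Finset.mem_coe, Finset.mem_range] at ha ⊢
    exact ⟨lt_of_le_of_lt hba.1 ha.1, lt_of_le_of_lt hba.2 ha.2⟩

/-- Sum of the first coordinates of the steps of a lattice path. -/
def sumFst (L : List (ℕ × ℕ)) : ℕ := (L.map Prod.fst).sum

/-- Sum of the second coordinates of the steps of a lattice path. -/
def sumSnd (L : List (ℕ × ℕ)) : ℕ := (L.map Prod.snd).sum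

/-- A little Schröder path of size n: a lattice path from (0,0) to (n,n) with steps
(1,0), (0,1), (1,1) that never goes below the diagonal x = y and has no (1,1) step
lying on the diagonal. -/
def IsSchroederPath (n : ℕ) (L : List (ℕ × ℕ)) : Prop :=
  (∀ s ∈ L, s = (1, 0) ∨ s = (0, 1) ∨ s = (1, 1)) ∧
  sumFst L = n ∧ sumSnd L = n ∧
  (∀ t, sumFst (L.take t) ≤ sumSnd (L.take t)) ∧
  (∀ t, (h : t < L.length) → L.get ⟨t, h⟩ = (1, 1) →
      sumFst (L.take t) ≠ sumSnd (L.take t))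

/-- The n-th little Schröder number, as the number of little Schröder paths. -/
noncomputable def schroeder (n : ℕ) : ℕ := Nat.card {L : List (ℕ × ℕ) // IsSchroederPath n L}

end HookG


namespace HookG

-- ===== auxiliary generic lemmas =====
lemma sum_map_take (f : ℕ × ℕ → ℕ) (L : List (ℕ × ℕ)) (t : ℕ) :
    ((L.take t).map f).sum = ∑ k ∈ Finset.range (min t L.length), f (L.getD k (0, 0)) := by
  induction L generalizing t with
  | nil => simp
  | cons a tl ih =>
    cases t with
    | zero => simp
    | succ s =>
      have hmin : min (s + 1) (a :: tl).length = min s tl.length + 1 := by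
        simp [List.length_cons, Nat.succ_min_succ]
      rw [hmin, Finset.sum_range_succ']
      simp only [List.take_succ_cons, List.map_cons, List.sum_cons, ih s]
      have h1 : ∀ k, (a :: tl).getD (k + 1) (0,0) = tl.getD k (0,0) := fun k => rfl
      have h2 : (a :: tl).getD 0 (0,0) = a := rfl
      simp only [h1, h2]
      ring

lemma lower_mem_iff {n : ℕ} (p : ℕ → Prop) [DecidablePred p]
    (hp : ∀ i j, i ≤ j → j < n → p j → p i) {j : ℕ} (hj : j < n) :
    p j ↔ j < ((Finset.range n).filter p).card := by
  constructor
  · intro hpj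
    have hsub : Finset.range (j + 1) ⊆ (Finset.range n).filter p := by
      intro i hi
      rw [Finset.mem_range] at hi
      rw [Finset.mem_filter, Finset.mem_range]
      exact ⟨lt_of_lt_of_le hi hj, hp i j (Nat.lt_succ_iff.mp hi) hj hpj⟩
    have := Finset.card_le_card hsub
    simpa using this
  · intro hcard
    by_contra hpj
    have hsub : (Finset.range n).filter p ⊆ Finset.range j := by
      intro i hi
      rw [Finset.mem_filter, Finset.mem_range] at hi
      rw [Finset.mem_range]
      by_contra hij
      exact hpj (hp j i (Nat.le_of_not_lt hij) hi.1 hi.2)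
    have := Finset.card_le_card hsub
    simp at this
    omega

-- ===== the forward map =====
lemma mem_skew {n : ℕ} {u : ℕ × ℕ} : u ∈ skewCells (twoRow n) ⊥ ↔ u.1 < 2 ∧ u.2 < n := by
  simp [skewCells, twoRow, YoungDiagram.mem_cells, Finset.mem_product]

section
variable (n : ℕ) (T : ℕ × ℕ → ℕ)

open Classical in
noncomputable def stepOf (k : ℕ) : ℕ × ℕ :=
  ((if ∃ j < n, T (1, j) = k + 1 then 1 else 0),
   (if ∃ j < n, T (0, j) = k + 1 then 1 else 0))

noncomputable def toPath : List (ℕ × ℕ) :=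
  (List.range (maxEntry (twoRow n) ⊥ T)).map (stepOf n T)

variable {n T}

lemma toPath_length : (toPath n T).length = maxEntry (twoRow n) ⊥ T := by
  simp [toPath]

lemma toPath_getD {k : ℕ} (hk : k < maxEntry (twoRow n) ⊥ T) :
    (toPath n T).getD k (0, 0) = stepOf n T k := by
  have hk' : k < (toPath n T).length := by rwa [toPath_length]
  rw [List.getD_eq_getElem _ _ hk']
  simp [toPath]

lemma toPath_get {k : ℕ} (hk : k < (toPath n T).length) :
    (toPath n T).get ⟨k, hk⟩ = stepOf n T k := by
  simp [toPath]

variable (hT : IsSIT (twoRow n) ⊥ T)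

lemma cell_mem {i j : ℕ} (hi : i < 2) (hj : j < n) : (i, j) ∈ skewCells (twoRow n) ⊥ :=
  mem_skew.mpr ⟨hi, hj⟩

include hT

lemma row_mono {i j₁ j₂ : ℕ} (hi : i < 2) (h : j₁ < j₂) (hj : j₂ < n) :
    T (i, j₁) < T (i, j₂) :=
  hT.1.2.2.1 i j₁ j₂ h (cell_mem hi (h.trans hj)) (cell_mem hi hj)

lemma col_mono {j : ℕ} (hj : j < n) : T (0, j) < T (1, j) :=
  hT.1.2.2.2 0 1 j one_pos (cell_mem (by norm_num) hj) (cell_mem (by norm_num) hj)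

lemma entry_pos {i j : ℕ} (hi : i < 2) (hj : j < n) : 1 ≤ T (i, j) :=
  hT.1.2.1 _ (cell_mem hi hj)

omit hT in
lemma entry_le {i j : ℕ} (hi : i < 2) (hj : j < n) : T (i, j) ≤ maxEntry (twoRow n) ⊥ T :=
  Finset.le_sup (cell_mem hi hj)

open Classical in
lemma count_take (i : ℕ) (hi : i < 2) (t : ℕ) :
    ∑ k ∈ Finset.range (min t (maxEntry (twoRow n) ⊥ T)),
      (if ∃ j < n, T (i, j) = k + 1 then (1:ℕ) else 0)
    = ((Finset.range n).filter fun j => T (i, j) ≤ t).card := by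
  classical
  rw [Finset.sum_boole, Nat.cast_id]
  symm
  apply Finset.card_bij (fun j _ => T (i, j) - 1)
  · intro j hj
    rw [Finset.mem_filter, Finset.mem_range] at hj
    have h1 := entry_pos hT hi hj.1
    have h2 := entry_le (T := T) hi hj.1
    rw [Finset.mem_filter, Finset.mem_range, lt_min_iff]
    exact ⟨⟨by omega, by omega⟩, j, hj.1, by omega⟩
  · intro j1 hj1 j2 hj2 heq
    rw [Finset.mem_filter, Finset.mem_range] at hj1 hj2
    have h1 := entry_pos hT hi hj1.1
    have h2 := entry_pos hT hi hj2.1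
    have heq' : T (i, j1) = T (i, j2) := by omega
    by_contra hne
    rcases Nat.lt_or_ge j1 j2 with h | h
    · exact absurd heq' (Nat.ne_of_lt (row_mono hT hi h hj2.1))
    · have h' : j2 < j1 := by omega
      exact absurd heq'.symm (Nat.ne_of_lt (row_mono hT hi h' hj1.1))
  · intro k hk
    rw [Finset.mem_filter, Finset.mem_range, lt_min_iff] at hk
    obtain ⟨⟨hkt, hkm⟩, j, hjn, hjval⟩ := hk
    exact ⟨j, Finset.mem_filter.mpr ⟨Finset.mem_range.mpr hjn, by omega⟩, by omega⟩

open Classical in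
lemma sumSnd_toPath_take (t : ℕ) :
    sumSnd ((toPath n T).take t) = ((Finset.range n).filter fun j => T (0, j) ≤ t).card := by
  rw [sumSnd, sum_map_take, toPath_length]
  rw [← count_take hT 0 (by norm_num) t]
  apply Finset.sum_congr rfl
  intro k hk
  rw [Finset.mem_range, lt_min_iff] at hk
  rw [toPath_getD hk.2]
  simp [stepOf]

open Classical in
lemma sumFst_toPath_take (t : ℕ) :
    sumFst ((toPath n T).take t) = ((Finset.range n).filter fun j => T (1, j) ≤ t).card := by
  rw [sumFst, sum_map_take, toPath_length]
  rw [← count_take hT 1 (by norm_num) t]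
  apply Finset.sum_congr rfl
  intro k hk
  rw [Finset.mem_range, lt_min_iff] at hk
  rw [toPath_getD hk.2]
  simp [stepOf]

lemma toPath_isSchroeder : IsSchroederPath n (toPath n T) := by
  classical
  set m := maxEntry (twoRow n) ⊥ T with hm
  have hfull : ∀ i, i < 2 → ((Finset.range n).filter fun j => T (i, j) ≤ m).card = n := by
    intro i hi
    rw [Finset.filter_true_of_mem, Finset.card_range]
    intro j hj
    exact entry_le (T := T) hi (Finset.mem_range.mp hj)
  refine ⟨?_, ?_, ?_, ?_, ?_⟩
  · intro s hs
    rw [toPath, List.mem_map] at hs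
    obtain ⟨k, hk, rfl⟩ := hs
    rw [List.mem_range] at hk
    obtain ⟨⟨i, j⟩, hu, huval⟩ := hT.2 (k + 1) (by omega) (by omega)
    obtain ⟨hu1, hu2⟩ := mem_skew.mp hu
    have hex : (∃ j < n, T (1, j) = k + 1) ∨ (∃ j < n, T (0, j) = k + 1) := by
      simp only at hu1 hu2
      interval_cases i
      · right; exact ⟨j, hu2, huval⟩
      · left; exact ⟨j, hu2, huval⟩
    rw [stepOf]
    split_ifs with h1 h2 h2
    · right; right; rfl
    · left; rfl
    · right; left; rfl
    · rcases hex with h | h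
      · exact absurd h h1
      · exact absurd h h2
  · have := sumFst_toPath_take hT ((toPath n T).length)
    rwa [List.take_length, toPath_length, ← hm, hfull 1 (by norm_num)] at this
  · have := sumSnd_toPath_take hT ((toPath n T).length)
    rwa [List.take_length, toPath_length, ← hm, hfull 0 (by norm_num)] at this
  · intro t
    rw [sumFst_toPath_take hT, sumSnd_toPath_take hT]
    apply Finset.card_le_card
    intro j hj
    rw [Finset.mem_filter] at hj ⊢
    exact ⟨hj.1, le_trans (le_of_lt (col_mono hT (Finset.mem_range.mp hj.1))) hj.2⟩
  · intro t ht hget heq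
    rw [sumFst_toPath_take hT, sumSnd_toPath_take hT] at heq
    rw [toPath_get] at hget
    have hstep : (∃ j < n, T (1, j) = t + 1) ∧ (∃ j < n, T (0, j) = t + 1) := by
      rw [stepOf] at hget
      constructor
      · by_contra h
        rw [if_neg h] at hget
        simp at hget
      · by_contra h
        rw [if_neg h] at hget
        simp at hget
    obtain ⟨⟨j₂, hj₂n, hj₂⟩, ⟨j₁, hj₁n, hj₁⟩⟩ := hstep
    -- lower set structure
    have hlow : ∀ i, i < 2 → ∀ a b, a ≤ b → b < n → T (i, b) ≤ t → T (i, a) ≤ t := by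
      intro i hi a b hab hb hTb
      rcases Nat.eq_or_lt_of_le hab with rfl | h
      · exact hTb
      · exact le_trans (le_of_lt (row_mono hT hi h hb)) hTb
    have key : ∀ i, i < 2 → ∀ j, j < n → T (i, j) = t + 1 →
        j = ((Finset.range n).filter fun j' => T (i, j') ≤ t).card := by
      intro i hi j hjn hjv
      have hiff := fun (j' : ℕ) (hj' : j' < n) =>
        lower_mem_iff (fun j'' => T (i, j'') ≤ t) (hlow i hi) hj'
      set a := ((Finset.range n).filter fun j' => T (i, j') ≤ t).card with ha
      have h1 : ¬ (j < a) := by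
        rw [← hiff j hjn]; omega
      have h2 : ¬ (a < j) := by
        intro h
        have : T (i, a) ≤ t := by
          have := row_mono hT hi h hjn
          omega
        have := (hiff a (h.trans hjn)).mp this
        omega
      omega
    have e1 := key 1 (by norm_num) j₂ hj₂n hj₂
    have e0 := key 0 (by norm_num) j₁ hj₁n hj₁
    have : j₁ = j₂ := by omega
    subst this
    have := col_mono hT hj₁n
    omega

omit hT in
lemma val_transfer {T' : ℕ × ℕ → ℕ} (hT : IsSIT (twoRow n) ⊥ T)
    (hsteps : ∀ k, k < maxEntry (twoRow n) ⊥ T → stepOf n T k = stepOf n T' k)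
    {i : ℕ} (hi : i < 2) {j : ℕ} (hj : j < n) : ∃ j' < n, T' (i, j') = T (i, j) := by
  classical
  have h1 := entry_pos hT hi hj
  have h2 := entry_le (T := T) hi hj
  set v := T (i, j) with hv
  set k := v - 1 with hkdef
  have hk : k < maxEntry (twoRow n) ⊥ T := by omega
  have hstep := hsteps k hk
  have hk1 : k + 1 = v := by omega
  interval_cases i
  · have hcond : ∃ j' < n, T (0, j') = k + 1 := ⟨j, hj, by omega⟩
    by_contra hnone
    push_neg at hnone
    have hnone' : ¬ ∃ j' < n, T' (0, j') = k + 1 := by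
      rintro ⟨j', hj', hval⟩
      exact absurd (hk1 ▸ hval) (hnone j' hj')
    have e1 : (stepOf n T k).2 = 1 := by simp only [stepOf]; rw [if_pos hcond]
    have e2 : (stepOf n T' k).2 = 0 := by simp only [stepOf]; rw [if_neg hnone']
    rw [hstep] at e1
    omega
  · have hcond : ∃ j' < n, T (1, j') = k + 1 := ⟨j, hj, by omega⟩
    by_contra hnone
    push_neg at hnone
    have hnone' : ¬ ∃ j' < n, T' (1, j') = k + 1 := by
      rintro ⟨j', hj', hval⟩
      exact absurd (hk1 ▸ hval) (hnone j' hj')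
    have e1 : (stepOf n T k).1 = 1 := by simp only [stepOf]; rw [if_pos hcond]
    have e2 : (stepOf n T' k).1 = 0 := by simp only [stepOf]; rw [if_neg hnone']
    rw [hstep] at e1
    omega

omit hT in
lemma toPath_injective {T' : ℕ × ℕ → ℕ} (hT : IsSIT (twoRow n) ⊥ T)
    (hT' : IsSIT (twoRow n) ⊥ T') (h : toPath n T = toPath n T') : T = T' := by
  classical
  have hmm : maxEntry (twoRow n) ⊥ T = maxEntry (twoRow n) ⊥ T' := by
    have := congrArg List.length h
    rwa [toPath_length, toPath_length] at this
  have hsteps : ∀ k, k < maxEntry (twoRow n) ⊥ T → stepOf n T k = stepOf n T' k := by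
    intro k hk
    have h1 : (toPath n T).getD k (0,0) = (toPath n T').getD k (0,0) := by rw [h]
    rwa [toPath_getD hk, toPath_getD (hmm ▸ hk)] at h1
  have hsteps' : ∀ k, k < maxEntry (twoRow n) ⊥ T' → stepOf n T' k = stepOf n T k :=
    fun k hk => (hsteps k (hmm ▸ hk)).symm
  have key : ∀ i, i < 2 → ∀ j, j < n → T (i, j) = T' (i, j) := by
    intro i hi
    set s : Finset ℕ := (Finset.range n).image (fun j => T (i, j)) with hs
    set s' : Finset ℕ := (Finset.range n).image (fun j => T' (i, j)) with hs'
    have hss : s = s' := by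
      ext v
      simp only [hs, hs', Finset.mem_image, Finset.mem_range]
      constructor
      · rintro ⟨j, hj, rfl⟩
        obtain ⟨j', hj', hval⟩ := val_transfer hT hsteps hi hj
        exact ⟨j', hj', hval⟩
      · rintro ⟨j, hj, rfl⟩
        obtain ⟨j', hj', hval⟩ := val_transfer hT' hsteps' hi hj
        exact ⟨j', hj', hval⟩
    have hinj : ∀ (A : ℕ × ℕ → ℕ), IsSIT (twoRow n) ⊥ A →
        Set.InjOn (fun j => A (i, j)) (Finset.range n) := by
      intro A hA j1 hj1 j2 hj2 heq
      simp only [Finset.coe_range, Set.mem_Iio] at hj1 hj2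
      by_contra hne
      rcases Nat.lt_or_ge j1 j2 with hlt | hge
      · exact absurd heq (Nat.ne_of_lt (row_mono hA hi hlt hj2))
      · exact absurd heq.symm (Nat.ne_of_lt (row_mono hA hi (by omega) hj1))
    have hcard : s.card = n := by
      rw [hs, Finset.card_image_of_injOn (hinj T hT), Finset.card_range]
    have hcard' : s.card = n := hcard
    have hf : (fun j : Fin n => T (i, j.val)) = s.orderEmbOfFin hcard := by
      apply Finset.orderEmbOfFin_unique
      · intro x
        rw [hs]
        exact Finset.mem_image.mpr ⟨x.val, Finset.mem_range.mpr x.isLt, rfl⟩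
      · intro a b hab
        exact row_mono hT hi hab b.isLt
    have hf' : (fun j : Fin n => T' (i, j.val)) = s.orderEmbOfFin hcard := by
      apply Finset.orderEmbOfFin_unique
      · intro x
        rw [hss, hs']
        exact Finset.mem_image.mpr ⟨x.val, Finset.mem_range.mpr x.isLt, rfl⟩
      · intro a b hab
        exact row_mono hT' hi hab b.isLt
    intro j hj
    have := congrFun (hf.trans hf'.symm) ⟨j, hj⟩
    simpa using this
  funext u
  by_cases hu : u ∈ skewCells (twoRow n) ⊥
  · obtain ⟨i, j⟩ := u
    obtain ⟨hi, hj⟩ := mem_skew.mp hu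
    exact key i hi j hj
  · rw [hT.1.1 u hu, hT'.1.1 u hu]

omit hT in
lemma toPath_surjective (hn : 1 ≤ n) (L : List (ℕ × ℕ)) (hL : IsSchroederPath n L) :
    ∃ T : ℕ × ℕ → ℕ, IsSIT (twoRow n) ⊥ T ∧ toPath n T = L := by
  classical
  obtain ⟨h3, hFn, hSn, hpre, hdiag⟩ := hL
  set len := L.length with hlen
  set g : ℕ → ℕ × ℕ := fun k => L.getD k (0, 0) with hg
  have hgmem : ∀ k, k < len → g k = (1, 0) ∨ g k = (0, 1) ∨ g k = (1, 1) := by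
    intro k hk
    apply h3
    rw [hg]
    simp only
    rw [List.getD_eq_getElem L (0,0) hk]
    exact List.getElem_mem hk
  have hget : ∀ k (hk : k < len), L.get ⟨k, hk⟩ = g k := by
    intro k hk
    rw [hg]
    simp only
    rw [List.getD_eq_getElem L (0,0) hk, List.get_eq_getElem]
  set S0 : Finset ℕ := (Finset.range len).filter (fun k => (g k).2 = 1) with hS0
  set S1 : Finset ℕ := (Finset.range len).filter (fun k => (g k).1 = 1) with hS1
  have hmemS0 : ∀ k, k ∈ S0 ↔ k < len ∧ (g k).2 = 1 := by
    intro k; rw [hS0, Finset.mem_filter, Finset.mem_range]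
  have hmemS1 : ∀ k, k ∈ S1 ↔ k < len ∧ (g k).1 = 1 := by
    intro k; rw [hS1, Finset.mem_filter, Finset.mem_range]
  -- prefix sums as cards
  have hc0 : ∀ t, sumSnd (L.take t) = (S0.filter (· < t)).card := by
    intro t
    rw [sumSnd, sum_map_take]
    have hcong : ∀ k ∈ Finset.range (min t len), (g k).2 = if (g k).2 = 1 then 1 else 0 := by
      intro k hk
      rw [Finset.mem_range, lt_min_iff] at hk
      rcases hgmem k hk.2 with h | h | h <;> rw [h] <;> norm_num
    rw [Finset.sum_congr rfl hcong, Finset.sum_boole, Nat.cast_id]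
    congr 1
    ext k
    simp only [Finset.mem_filter, Finset.mem_range, lt_min_iff, hS0]
    tauto
  have hc1 : ∀ t, sumFst (L.take t) = (S1.filter (· < t)).card := by
    intro t
    rw [sumFst, sum_map_take]
    have hcong : ∀ k ∈ Finset.range (min t len), (g k).1 = if (g k).1 = 1 then 1 else 0 := by
      intro k hk
      rw [Finset.mem_range, lt_min_iff] at hk
      rcases hgmem k hk.2 with h | h | h <;> rw [h] <;> norm_num
    rw [Finset.sum_congr rfl hcong, Finset.sum_boole, Nat.cast_id]
    congr 1
    ext k
    simp only [Finset.mem_filter, Finset.mem_range, lt_min_iff, hS1]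
    tauto
  have hfix : ∀ S : Finset ℕ, S ⊆ Finset.range len → S.filter (· < len) = S := by
    intro S hS
    apply Finset.filter_true_of_mem
    intro x hx
    exact Finset.mem_range.mp (hS hx)
  have hS0card : S0.card = n := by
    have := hc0 len
    rw [List.take_length, hSn, hfix S0 (Finset.filter_subset _ _)] at this
    omega
  have hS1card : S1.card = n := by
    have := hc1 len
    rw [List.take_length, hFn, hfix S1 (Finset.filter_subset _ _)] at this
    omega
  have hlen1 : 1 ≤ len := by
    rcases Nat.eq_zero_or_pos len with h0 | h
    · exfalso
      have : L = [] := List.length_eq_zero_iff.mp h0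
      rw [this] at hSn
      simp [sumSnd] at hSn
      omega
    · exact h
  -- enumerations
  set e0 := S0.orderEmbOfFin hS0card with he0
  set e1 := S1.orderEmbOfFin hS1card with he1
  set E0 : ℕ → ℕ := fun i => if h : i < n then e0 ⟨i, h⟩ else 0 with hE0
  set E1 : ℕ → ℕ := fun i => if h : i < n then e1 ⟨i, h⟩ else 0 with hE1
  have hE0val : ∀ i (h : i < n), E0 i = e0 ⟨i, h⟩ := by intro i h; rw [hE0]; simp [h]
  have hE1val : ∀ i (h : i < n), E1 i = e1 ⟨i, h⟩ := by intro i h; rw [hE1]; simp [h]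
  have hE0mono : ∀ i j, i < j → j < n → E0 i < E0 j := by
    intro i j hij hj
    rw [hE0val i (hij.trans hj), hE0val j hj]
    exact (S0.orderEmbOfFin hS0card).strictMono (by exact_mod_cast hij)
  have hE1mono : ∀ i j, i < j → j < n → E1 i < E1 j := by
    intro i j hij hj
    rw [hE1val i (hij.trans hj), hE1val j hj]
    exact (S1.orderEmbOfFin hS1card).strictMono (by exact_mod_cast hij)
  have hE0mem : ∀ i, i < n → E0 i ∈ S0 := by
    intro i hi
    rw [hE0val i hi]
    exact Finset.orderEmbOfFin_mem S0 hS0card _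
  have hE1mem : ∀ i, i < n → E1 i ∈ S1 := by
    intro i hi
    rw [hE1val i hi]
    exact Finset.orderEmbOfFin_mem S1 hS1card _
  have hE0surj : ∀ x ∈ S0, ∃ i < n, E0 i = x := by
    intro x hx
    have : x ∈ Set.range (S0.orderEmbOfFin hS0card) := by
      rw [Finset.range_orderEmbOfFin]; exact hx
    obtain ⟨i, hi⟩ := this
    exact ⟨i.val, i.isLt, by rw [hE0val i.val i.isLt]; simpa using hi⟩
  have hE1surj : ∀ x ∈ S1, ∃ i < n, E1 i = x := by
    intro x hx
    have : x ∈ Set.range (S1.orderEmbOfFin hS1card) := by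
      rw [Finset.range_orderEmbOfFin]; exact hx
    obtain ⟨i, hi⟩ := this
    exact ⟨i.val, i.isLt, by rw [hE1val i.val i.isLt]; simpa using hi⟩
  -- the key counting equivalences
  have keygen : ∀ (S : Finset ℕ) (E : ℕ → ℕ),
      (∀ i j, i < j → j < n → E i < E j) → (∀ i, i < n → E i ∈ S) →
      (∀ x ∈ S, ∃ i < n, E i = x) →
      ∀ j, j < n → ∀ t, (E j < t ↔ j < (S.filter (· < t)).card) := by
    intro S E hmono hmem hsurj j hj t
    have hinj : ∀ i1 i2, i1 < n → i2 < n → E i1 = E i2 → i1 = i2 := by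
      intro i1 i2 h1 h2 heq
      by_contra hne
      rcases Nat.lt_or_ge i1 i2 with h | h
      · exact absurd heq (Nat.ne_of_lt (hmono i1 i2 h h2))
      · have : i2 < i1 := by omega
        exact absurd heq.symm (Nat.ne_of_lt (hmono i2 i1 this h1))
    have himg : S.filter (· < t) = ((Finset.range n).filter fun i => E i < t).image E := by
      ext x
      simp only [Finset.mem_filter, Finset.mem_image, Finset.mem_range]
      constructor
      · rintro ⟨hx, hxt⟩
        obtain ⟨i, hi, rfl⟩ := hsurj x hx
        exact ⟨i, ⟨hi, hxt⟩, rfl⟩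
      · rintro ⟨i, ⟨hi, hit⟩, rfl⟩
        exact ⟨hmem i hi, hit⟩
    rw [himg, Finset.card_image_of_injOn ?inj]
    case inj =>
      intro i1 hi1 i2 hi2 heq
      simp only [Finset.coe_filter, Set.mem_setOf_eq, Finset.mem_range] at hi1 hi2
      exact hinj i1 i2 hi1.1 hi2.1 heq
    exact lower_mem_iff (fun i => E i < t)
      (fun a b hab hb hbt => by
        rcases Nat.eq_or_lt_of_le hab with rfl | h
        · exact hbt
        · exact (hmono a b h hb).trans hbt) hj
  have key0 := keygen S0 E0 hE0mono hE0mem hE0surj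
  have key1 := keygen S1 E1 hE1mono hE1mem hE1surj
  -- columns strictly increase
  have hcol : ∀ j, j < n → E0 j < E1 j := by
    intro j hj
    have hle : E0 j ≤ E1 j := by
      have h1 : j < (S1.filter (· < E1 j + 1)).card :=
        (key1 j hj (E1 j + 1)).mp (by omega)
      have h2 : (S1.filter (· < E1 j + 1)).card ≤ (S0.filter (· < E1 j + 1)).card := by
        rw [← hc0, ← hc1]; exact hpre (E1 j + 1)
      have h3 : E0 j < E1 j + 1 := (key0 j hj (E1 j + 1)).mpr (by omega)
      omega
    rcases Nat.lt_or_ge (E0 j) (E1 j) with h | h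
    · exact h
    have heq : E0 j = E1 j := by omega
    exfalso
    set t0 := E1 j with ht0
    have ht0len : t0 < len := Finset.mem_range.mp (Finset.filter_subset _ _ (hE1mem j hj))
    have h11 : g t0 = (1, 1) := by
      have m0 : (g t0).2 = 1 := ((hmemS0 t0).mp (heq ▸ hE0mem j hj)).2
      have m1 : (g t0).1 = 1 := ((hmemS1 t0).mp (hE1mem j hj)).2
      rcases hgmem t0 ht0len with h | h | h <;> rw [h] at m0 m1 ⊢ <;> simp_all
    have hne := hdiag t0 ht0len (by rw [hget t0 ht0len]; exact h11)
    rw [hc0, hc1] at hne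
    -- both counts equal j
    have hcount : ∀ (S : Finset ℕ) (E : ℕ → ℕ)
        (key : ∀ j, j < n → ∀ t, (E j < t ↔ j < (S.filter (· < t)).card))
        (hmono : ∀ i j, i < j → j < n → E i < E j), E j = t0 →
        (S.filter (· < t0)).card = j := by
      intro S E key hmono hEj
      have hub : (S.filter (· < t0)).card ≤ j := by
        have := key j hj t0
        omega
      rcases Nat.lt_or_ge (S.filter (· < t0)).card j with h | h
      · exfalso
        set c := (S.filter (· < t0)).card with hc
        have hcn : c < n := h.trans hj
        have : E c < t0 := by
          have := hmono c j h hj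
          omega
        have := (key c hcn t0).mp this
        omega
      · omega
    have e0eq := hcount S0 E0 key0 hE0mono heq
    have e1eq := hcount S1 E1 key1 hE1mono rfl
    omega
  -- define the tableau
  set T : ℕ × ℕ → ℕ := fun u =>
    if u.1 = 0 ∧ u.2 < n then E0 u.2 + 1
    else if u.1 = 1 ∧ u.2 < n then E1 u.2 + 1 else 0 with hT
  have hT0 : ∀ j, j < n → T (0, j) = E0 j + 1 := by
    intro j hj; rw [hT]; simp [hj]
  have hT1 : ∀ j, j < n → T (1, j) = E1 j + 1 := by
    intro j hj; rw [hT]; simp [hj]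
  have hTval : ∀ i j, i < 2 → j < n → ∃ (E : ℕ → ℕ), (E = E0 ∨ E = E1) ∧ T (i, j) = E j + 1 := by
    intro i j hi hj
    interval_cases i
    · exact ⟨E0, Or.inl rfl, hT0 j hj⟩
    · exact ⟨E1, Or.inr rfl, hT1 j hj⟩
  have hTzero : ∀ u, u ∉ skewCells (twoRow n) ⊥ → T u = 0 := by
    intro u hu
    rw [mem_skew] at hu
    push_neg at hu
    have hTu : T u = if u.1 = 0 ∧ u.2 < n then E0 u.2 + 1
        else if u.1 = 1 ∧ u.2 < n then E1 u.2 + 1 else 0 := rfl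
    rw [hTu]
    split_ifs with h1 h2
    · exfalso; have := hu (by omega); omega
    · exfalso; have := hu (by omega); omega
    · rfl
  have hEltlen : ∀ j, j < n → E0 j < len ∧ E1 j < len := by
    intro j hj
    constructor
    · exact Finset.mem_range.mp (Finset.filter_subset _ _ (hE0mem j hj))
    · exact Finset.mem_range.mp (Finset.filter_subset _ _ (hE1mem j hj))
  have hmax : maxEntry (twoRow n) ⊥ T = len := by
    apply le_antisymm
    · apply Finset.sup_le
      intro u hu
      obtain ⟨hi, hj⟩ := mem_skew.mp hu
      obtain ⟨E, hE, hval⟩ := hTval u.1 u.2 hi hj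
      have := hEltlen u.2 hj
      rcases hE with rfl | rfl
      · rw [show ((u.1, u.2) : ℕ × ℕ) = u from rfl] at hval
        omega
      · rw [show ((u.1, u.2) : ℕ × ℕ) = u from rfl] at hval
        omega
    · -- len-1 is in S0 or S1
      have hk : len - 1 < len := by omega
      have : len - 1 ∈ S0 ∨ len - 1 ∈ S1 := by
        rcases hgmem (len - 1) hk with h | h | h
        · right; rw [hmemS1]; exact ⟨hk, by rw [h]⟩
        · left; rw [hmemS0]; exact ⟨hk, by rw [h]⟩
        · left; rw [hmemS0]; exact ⟨hk, by rw [h]⟩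
      rcases this with h | h
      · obtain ⟨i, hi, hEi⟩ := hE0surj _ h
        have : T (0, i) = len := by rw [hT0 i hi, hEi]; omega
        calc len = T (0, i) := this.symm
          _ ≤ _ := Finset.le_sup (cell_mem (by norm_num) hi)
      · obtain ⟨i, hi, hEi⟩ := hE1surj _ h
        have : T (1, i) = len := by rw [hT1 i hi, hEi]; omega
        calc len = T (1, i) := this.symm
          _ ≤ _ := Finset.le_sup (cell_mem (by norm_num) hi)
  have hTSIT : IsSIT (twoRow n) ⊥ T := by
    refine ⟨⟨hTzero, ?_, ?_, ?_⟩, ?_⟩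
    · intro u hu
      obtain ⟨hi, hj⟩ := mem_skew.mp hu
      obtain ⟨E, hE, hval⟩ := hTval u.1 u.2 hi hj
      rw [show ((u.1, u.2) : ℕ × ℕ) = u from rfl] at hval
      omega
    · intro i j₁ j₂ hjj h1 h2
      obtain ⟨hi, hj1⟩ := mem_skew.mp h1
      obtain ⟨-, hj2⟩ := mem_skew.mp h2
      simp only at hi hj1 hj2
      interval_cases i
      · rw [hT0 j₁ hj1, hT0 j₂ hj2]
        have := hE0mono j₁ j₂ hjj hj2
        omega
      · rw [hT1 j₁ hj1, hT1 j₂ hj2]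
        have := hE1mono j₁ j₂ hjj hj2
        omega
    · intro i₁ i₂ j hii h1 h2
      obtain ⟨hi1, hj⟩ := mem_skew.mp h1
      obtain ⟨hi2, -⟩ := mem_skew.mp h2
      simp only at hi1 hi2 hj
      have : i₁ = 0 ∧ i₂ = 1 := by omega
      obtain ⟨rfl, rfl⟩ := this
      rw [hT0 j hj, hT1 j hj]
      have := hcol j hj
      omega
    · intro k hk1 hk2
      rw [hmax] at hk2
      have hk : k - 1 < len := by omega
      have : k - 1 ∈ S0 ∨ k - 1 ∈ S1 := by
        rcases hgmem (k - 1) hk with h | h | h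
        · right; rw [hmemS1]; exact ⟨hk, by rw [h]⟩
        · left; rw [hmemS0]; exact ⟨hk, by rw [h]⟩
        · left; rw [hmemS0]; exact ⟨hk, by rw [h]⟩
      rcases this with h | h
      · obtain ⟨i, hi, hEi⟩ := hE0surj _ h
        exact ⟨(0, i), cell_mem (by norm_num) hi, by rw [hT0 i hi, hEi]; omega⟩
      · obtain ⟨i, hi, hEi⟩ := hE1surj _ h
        exact ⟨(1, i), cell_mem (by norm_num) hi, by rw [hT1 i hi, hEi]; omega⟩
  refine ⟨T, hTSIT, ?_⟩
  -- the paths coincide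
  have hlen' : (toPath n T).length = L.length := by
    rw [toPath_length, hmax]
  apply List.ext_get hlen'
  intro k hk hk'
  rw [toPath_get, hget k hk']
  have hklen : k < len := hk'
  have hiff0 : (∃ j < n, T (0, j) = k + 1) ↔ (g k).2 = 1 := by
    constructor
    · rintro ⟨j, hj, hval⟩
      rw [hT0 j hj] at hval
      have : E0 j = k := by omega
      exact ((hmemS0 k).mp (this ▸ hE0mem j hj)).2
    · intro hgk
      obtain ⟨i, hi, hEi⟩ := hE0surj k ((hmemS0 k).mpr ⟨hklen, hgk⟩)
      exact ⟨i, hi, by rw [hT0 i hi, hEi]⟩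
  have hiff1 : (∃ j < n, T (1, j) = k + 1) ↔ (g k).1 = 1 := by
    constructor
    · rintro ⟨j, hj, hval⟩
      rw [hT1 j hj] at hval
      have : E1 j = k := by omega
      exact ((hmemS1 k).mp (this ▸ hE1mem j hj)).2
    · intro hgk
      obtain ⟨i, hi, hEi⟩ := hE1surj k ((hmemS1 k).mpr ⟨hklen, hgk⟩)
      exact ⟨i, hi, by rw [hT1 i hi, hEi]⟩
  rw [stepOf]
  have hfst : (if ∃ j < n, T (1, j) = k + 1 then (1:ℕ) else 0) = (g k).1 := by
    split_ifs with h
    · exact (hiff1.mp h).symm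
    · rcases hgmem k hklen with hh | hh | hh <;> rw [hh] <;> rw [hh] at hiff1 <;>
        exact absurd (hiff1.mpr rfl) h
  have hsnd : (if ∃ j < n, T (0, j) = k + 1 then (1:ℕ) else 0) = (g k).2 := by
    split_ifs with h
    · exact (hiff0.mp h).symm
    · rcases hgmem k hklen with hh | hh | hh <;> rw [hh] <;> rw [hh] at hiff0 <;>
        exact absurd (hiff0.mpr rfl) h
  rw [hfst, hsnd]

end
end HookG

/-- Proposition 2.1 [Pechenik]: the number of standard increasing tableaux of the
two-row rectangular shape `(n,n)` equals the n-th little Schröder number. -/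
theorem stmt4 (n : ℕ) (hn : 1 ≤ n) :
    Nat.card {T : ℕ × ℕ → ℕ // IsSIT (twoRow n) ⊥ T} = schroeder n := by
  rw [schroeder]
  apply Nat.card_eq_of_bijective
    (f := fun T : {T : ℕ × ℕ → ℕ // IsSIT (twoRow n) ⊥ T} =>
      (⟨toPath n T.1, toPath_isSchroeder T.2⟩ : {L : List (ℕ × ℕ) // IsSchroederPath n L}))
  constructor
  · intro T1 T2 h
    exact Subtype.ext (toPath_injective T1.2 T2.2 (congrArg Subtype.val h))
  · intro L
    obtain ⟨T, hT, hTL⟩ := toPath_surjective hn L.1 L.2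
    exact ⟨⟨T, hT⟩, Subtype.ext hTL⟩
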